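/- Let W be a symmetric positive definite n×n real matrix and T an invertible n×n real matrix, so that T·W·Tᵀ is symmetric positive definite. Define P := (T·W·Tᵀ)^(-1/2) · T · W^(1/2). Then Pᵀ·P = I (P is an orthogonal matrix) and moreover P = (T·W·Tᵀ)^(1/2) · (Tᵀ)⁻¹ · W^(-1/2). -/

import Mathlib

/-!
Write `S = W^(1/2)` and `R = (T W Tᵀ)^(1/2)`, both symmetric. Then
`P Pᵀ = R⁻¹ T S S Tᵀ R⁻¹ = R⁻¹ (T W Tᵀ) R⁻¹ = 1`, so `P` is orthogonal, and hence
`P = (Pᵀ)⁻¹ = (S Tᵀ R⁻¹)⁻¹ = R (Tᵀ)⁻¹ S⁻¹`.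
-/

open Matrix

section

open scoped ComplexOrder

namespace Matrix.PosSemidef

noncomputable def sqrt {n 𝕜 : Type*} [Fintype n] [RCLike 𝕜] [DecidableEq n]
    {A : Matrix n n 𝕜} (hA : A.PosSemidef) : Matrix n n 𝕜 :=
  hA.1.eigenvectorUnitary.1 * diagonal ((↑) ∘ (√·) ∘ hA.1.eigenvalues) *
    (star hA.1.eigenvectorUnitary : Matrix n n 𝕜)

end Matrix.PosSemidef

end

namespace Matrix

open scoped ComplexOrder

variable {n 𝕜 : Type*} [Fintype n] [DecidableEq n] [RCLike 𝕜] {A : Matrix n n 𝕜}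

theorem PosSemidef.sqrt_eq_cfc (hA : A.PosSemidef) : hA.sqrt = cfc Real.sqrt A := by
  rw [hA.1.cfc_eq, IsHermitian.cfc, Unitary.conjStarAlgAut_apply, sqrt]

theorem PosSemidef.isHermitian_sqrt (hA : A.PosSemidef) : hA.sqrt.IsHermitian := by
  rw [hA.sqrt_eq_cfc]
  exact cfc_predicate Real.sqrt A

theorem PosSemidef.sqrt_mul_sqrt (hA : A.PosSemidef) : hA.sqrt * hA.sqrt = A := by
  have hspec : ∀ x ∈ spectrum ℝ A, 0 ≤ x := by
    rw [hA.1.spectrum_real_eq_range_eigenvalues]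
    rintro - ⟨i, rfl⟩
    exact hA.eigenvalues_nonneg i
  rw [hA.sqrt_eq_cfc, ← cfc_mul Real.sqrt Real.sqrt A,
    cfc_congr fun x hx => Real.mul_self_sqrt (hspec x hx)]
  exact cfc_id' ℝ A hA.1

theorem PosDef.isUnit_det_sqrt (hA : A.PosDef) : IsUnit hA.posSemidef.sqrt.det := by
  refine isUnit_iff_ne_zero.2 fun h => hA.det_pos.ne' ?_
  rw [← hA.posSemidef.sqrt_mul_sqrt, det_mul, h, zero_mul]

theorem PosSemidef.transpose_sqrt {B : Matrix n n ℝ} (hB : B.PosSemidef) :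
    hB.sqrtᵀ = hB.sqrt := by
  simpa using hB.isHermitian_sqrt.eq

theorem inv_mul_mul_transpose_eq_one {α : Type*} [CommRing α] {R M : Matrix n n α}
    (hR : IsUnit R.det) (hRt : Rᵀ = R) (hM : M * Mᵀ = R * R) :
    R⁻¹ * M * (R⁻¹ * M)ᵀ = 1 := by
  rw [transpose_mul, transpose_nonsing_inv, hRt]
  calc R⁻¹ * M * (Mᵀ * R⁻¹) = R⁻¹ * (M * Mᵀ) * R⁻¹ := by simp only [Matrix.mul_assoc]
    _ = 1 := by rw [hM, ← Matrix.mul_assoc, nonsing_inv_mul _ hR, one_mul, mul_nonsing_inv _ hR]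

end Matrix

theorem scaling_matrix_orthogonal_general
    (n : ℕ) (W T : Matrix (Fin n) (Fin n) ℝ)
    (hW : W.PosDef)
    (hTWT : (T * W * Tᵀ).PosDef)
    (P : Matrix (Fin n) (Fin n) ℝ)
    (hP : P = (hTWT.posSemidef.sqrt)⁻¹ * T * hW.posSemidef.sqrt) :
    Pᵀ * P = 1 ∧ P = hTWT.posSemidef.sqrt * (Tᵀ)⁻¹ * (hW.posSemidef.sqrt)⁻¹ := by
  set S := hW.posSemidef.sqrt
  set R := hTWT.posSemidef.sqrt
  have hR : IsUnit R.det := hTWT.isUnit_det_sqrt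
  have hPPt : P * Pᵀ = 1 := by
    rw [hP, Matrix.mul_assoc R⁻¹]
    refine inv_mul_mul_transpose_eq_one hR hTWT.posSemidef.transpose_sqrt ?_
    rw [transpose_mul, hW.posSemidef.transpose_sqrt, Matrix.mul_assoc, ← Matrix.mul_assoc S,
      hW.posSemidef.sqrt_mul_sqrt, hTWT.posSemidef.sqrt_mul_sqrt, Matrix.mul_assoc]
  refine ⟨mul_eq_one_comm.mp hPPt, ?_⟩
  calc P = Pᵀ⁻¹ := (inv_eq_left_inv hPPt).symm
    _ = R * Tᵀ⁻¹ * S⁻¹ := by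
      rw [hP, transpose_mul, transpose_mul, transpose_nonsing_inv, hW.posSemidef.transpose_sqrt,
        hTWT.posSemidef.transpose_sqrt, Matrix.mul_inv_rev, Matrix.mul_inv_rev,
        nonsing_inv_nonsing_inv _ hR, Matrix.mul_assoc]

/-- If `W` is symmetric positive definite and `T` invertible (so that
`T * W * Tᵀ` is symmetric positive definite), then
`P = (T W Tᵀ)^(-1/2) * T * W^(1/2)` is orthogonal, and moreover
`P = (T W Tᵀ)^(1/2) * (Tᵀ)⁻¹ * W^(-1/2)`. -/
theorem scaling_matrix_orthogonal
    (n : ℕ) (hn : 1 ≤ n) (W T : Matrix (Fin n) (Fin n) ℝ)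
    (hW : W.PosDef) (hT : IsUnit T.det)
    (hTWT : (T * W * Tᵀ).PosDef)
    (P : Matrix (Fin n) (Fin n) ℝ)
    (hP : P = (hTWT.posSemidef.sqrt)⁻¹ * T * hW.posSemidef.sqrt) :
    Pᵀ * P = 1 ∧ P = hTWT.posSemidef.sqrt * (Tᵀ)⁻¹ * (hW.posSemidef.sqrt)⁻¹ :=
  scaling_matrix_orthogonal_general n W T hW hTWT P hP
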